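/- arXiv:1808.06959 — 4 statements merged into one kernel-verified Lean document; each statement's English description precedes it below -/
import Mathlib

section
/- Riemann sum convergence to the hard edge plasma function: for every x ∈ ℝ and every ℓ > 0, lim_{n→∞} (ℓ/√n) Σ_{k=1}^{⌊√n · log n⌋} γ(2x + kℓ/√n) / φ(−kℓ/√n) = H(2x). -/
open Real Filter

/-- The Gaussian kernel `γ(s) = (1/√(2π)) e^{-s²/2}`. -/
noncomputable def gaussKernel (s : ℝ) : ℝ :=
  (Real.sqrt (2 * Real.pi))⁻¹ * Real.exp (-s ^ 2 / 2)

/-- The free boundary function `φ(t) = (1/√(2π)) ∫_t^∞ e^{-s²/2} ds`. -/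
noncomputable def freeBoundary (t : ℝ) : ℝ :=
  (Real.sqrt (2 * Real.pi))⁻¹ * ∫ s in Set.Ioi t, Real.exp (-s ^ 2 / 2)

/-- The hard edge plasma function `H(x) = (1/√(2π)) ∫_{-∞}^0 e^{-(x-t)²/2} / φ(t) dt`. -/
noncomputable def plasmaH (x : ℝ) : ℝ :=
  (Real.sqrt (2 * Real.pi))⁻¹ *
    ∫ t in Set.Iio (0 : ℝ), Real.exp (-(x - t) ^ 2 / 2) / freeBoundary t

open MeasureTheory Set Topology

/-!
With `δ = ℓ/√n` and `f t = γ(2x + t)/φ(-t)`, the sum is the integral over `[0, Mδ]` of the step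
function `t ↦ f (δ⌈t/δ⌉)`, where `δ → 0` and `Mδ ≈ ℓ log n → ∞`. Since `φ(-t) ≥ φ(0) = 1/2` for
`t ≥ 0`, `f` is bounded on every window `[t, t + 1]` by two Gaussians centred near `t`, so dominated
convergence gives `∫_0^∞ f`, which is `H(2x)` after the substitution `t ↦ -t`.
-/

section RiemannSum

variable {f g : ℝ → ℝ} {δ : ℝ}

noncomputable def riemannStep (f : ℝ → ℝ) (δ t : ℝ) : ℝ := f (δ * ⌈t / δ⌉)

lemma le_mul_ceil_div (hδ : 0 < δ) (t : ℝ) : t ≤ δ * ⌈t / δ⌉ := by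
  rw [← div_le_iff₀' hδ]
  exact Int.le_ceil _

lemma mul_ceil_div_lt (hδ : 0 < δ) (t : ℝ) : δ * ⌈t / δ⌉ < t + δ := by
  rw [← lt_div_iff₀' hδ, add_div, div_self hδ.ne']
  exact Int.ceil_lt_add_one _

lemma measurable_riemannStep (hf : Measurable f) (δ : ℝ) : Measurable (riemannStep f δ) :=
  hf.comp (measurable_const.mul (measurable_from_top.comp (Int.measurable_ceil.comp
    (measurable_id.div_const δ))))

lemma riemannStep_eqOn_Ioc (hδ : 0 < δ) (k : ℕ) :
    EqOn (riemannStep f δ) (fun _ ↦ f ((k + 1) * δ)) (Ioc (k * δ) ((k + 1) * δ)) := by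
  rintro t ⟨hkt, htk⟩
  have hceil : ⌈t / δ⌉ = (k : ℤ) + 1 := by
    rw [Int.ceil_eq_iff]
    push_cast
    constructor
    · rwa [add_sub_cancel_right, lt_div_iff₀ hδ]
    · rwa [div_le_iff₀ hδ]
  simp only [riemannStep, hceil]
  push_cast
  rw [mul_comm]

lemma intervalIntegrable_riemannStep_cell (hδ : 0 < δ) (k : ℕ) :
    IntervalIntegrable (riemannStep f δ) volume (k * δ) ((k + 1) * δ) := by
  rw [intervalIntegrable_iff_integrableOn_Ioc_of_le (by gcongr; linarith)]
  exact (integrableOn_const measure_Ioc_lt_top.ne).congr_fun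
    (riemannStep_eqOn_Ioc hδ k).symm measurableSet_Ioc

lemma integral_riemannStep_cell (hδ : 0 < δ) (k : ℕ) :
    ∫ t in (k * δ)..((k + 1) * δ), riemannStep f δ t = δ * f ((k + 1) * δ) := by
  have hle : (k : ℝ) * δ ≤ (k + 1) * δ := by gcongr; linarith
  rw [intervalIntegral.integral_of_le hle, setIntegral_congr_fun measurableSet_Ioc
    (riemannStep_eqOn_Ioc hδ k), setIntegral_const, Real.volume_real_Ioc_of_le hle, smul_eq_mul]
  ring

lemma integral_riemannStep (hδ : 0 < δ) (M : ℕ) :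
    ∫ t in (0 : ℝ)..(M * δ), riemannStep f δ t = δ * ∑ k ∈ Finset.Icc 1 M, f (k * δ) := by
  have hcells := intervalIntegral.sum_integral_adjacent_intervals (a := fun k : ℕ ↦ k * δ)
    (f := riemannStep f δ) (μ := volume) (n := M) fun k _ ↦ by
      simpa using intervalIntegrable_riemannStep_cell (f := f) hδ k
  push_cast [zero_mul] at hcells
  rw [← hcells, Finset.mul_sum, ← Finset.Ico_add_one_right_eq_Icc, Finset.sum_Ico_eq_sum_range,
    add_tsub_cancel_right]
  refine Finset.sum_congr rfl fun k _ ↦ ?_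
  rw [integral_riemannStep_cell hδ k, Nat.cast_add, Nat.cast_one, add_comm 1 (k : ℝ)]

lemma tendsto_riemannStep {ι : Type*} {l : Filter ι} {δ : ι → ℝ} {t : ℝ} (hf : ContinuousAt f t)
    (hδ : Tendsto δ l (𝓝[>] 0)) : Tendsto (fun i ↦ riemannStep f (δ i) t) l (𝓝 (f t)) := by
  have hδpos : ∀ᶠ i in l, 0 < δ i := hδ.eventually_mem self_mem_nhdsWithin
  have hδ0 : Tendsto δ l (𝓝 0) := tendsto_nhds_of_tendsto_nhdsWithin hδ
  refine hf.tendsto.comp (tendsto_of_tendsto_of_tendsto_of_le_of_le' tendsto_const_nhds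
    (by simpa using tendsto_const_nhds.add hδ0) ?_ ?_)
  · filter_upwards [hδpos] with i hi using le_mul_ceil_div hi t
  · filter_upwards [hδpos] with i hi using (mul_ceil_div_lt hi t).le

theorem tendsto_riemannSum_integral_Ioi {ι : Type*} {l : Filter ι} [l.IsCountablyGenerated]
    (hf : Continuous f) (hg : IntegrableOn g (Ioi 0))
    (hfg : ∀ t s, 0 < t → t ≤ s → s ≤ t + 1 → ‖f s‖ ≤ g t) {δ : ι → ℝ} {M : ι → ℕ}
    (hδ : Tendsto δ l (𝓝[>] 0)) (hM : Tendsto (fun i ↦ M i * δ i) l atTop) :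
    Tendsto (fun i ↦ δ i * ∑ k ∈ Finset.Icc 1 (M i), f (k * δ i)) l
      (𝓝 (∫ t in Ioi 0, f t)) := by
  have hδpos : ∀ᶠ i in l, 0 < δ i := hδ.eventually_mem self_mem_nhdsWithin
  have hδ1 : ∀ᶠ i in l, δ i ≤ 1 :=
    (tendsto_nhds_of_tendsto_nhdsWithin hδ).eventually (ge_mem_nhds one_pos)
  have hsum : (fun i ↦ ∫ t in Ioi 0, (Iic (M i * δ i)).indicator (riemannStep f (δ i)) t)
      =ᶠ[l] fun i ↦ δ i * ∑ k ∈ Finset.Icc 1 (M i), f (k * δ i) := by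
    filter_upwards [hδpos] with i hi
    rw [setIntegral_indicator measurableSet_Iic, Ioi_inter_Iic,
      ← intervalIntegral.integral_of_le (by positivity), integral_riemannStep hi]
  refine Tendsto.congr' hsum (tendsto_integral_filter_of_dominated_convergence g
    (.of_forall fun i ↦ ((measurable_riemannStep hf.measurable _).indicator
      measurableSet_Iic).aestronglyMeasurable) ?_ hg ?_)
  · filter_upwards [hδpos, hδ1] with i hi hi1
    refine (ae_restrict_iff' measurableSet_Ioi).2 (.of_forall fun t ht ↦ ?_)
    exact norm_indicator_le_norm_self _ _ |>.trans <| hfg t _ ht (le_mul_ceil_div hi t)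
      (by linarith [mul_ceil_div_lt hi t])
  · refine (ae_restrict_iff' measurableSet_Ioi).2 (.of_forall fun t _ ↦ ?_)
    refine (tendsto_riemannStep hf.continuousAt hδ).congr' ?_
    filter_upwards [hM.eventually_ge_atTop t] with i hi
    rw [indicator_of_mem (mem_Iic.2 hi)]

end RiemannSum

lemma tendsto_natFloor_mul_atTop {ι : Type*} {l : Filter ι} {y δ : ι → ℝ}
    (hyδ : Tendsto (fun i ↦ y i * δ i) l atTop) (hδ : Tendsto δ l (𝓝[>] 0)) :
    Tendsto (fun i ↦ ⌊y i⌋₊ * δ i) l atTop := by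
  refine tendsto_atTop_mono' l ?_ (hyδ.atTop_add (tendsto_nhds_of_tendsto_nhdsWithin hδ).neg)
  filter_upwards [hδ.eventually_mem self_mem_nhdsWithin] with i hi
  have := mul_le_mul_of_nonneg_right (Nat.sub_one_lt_floor (y i)).le (le_of_lt hi)
  linarith

lemma integrable_exp_neg_sq_div_two : Integrable fun s : ℝ ↦ exp (-s ^ 2 / 2) := by
  simpa [neg_div, div_eq_inv_mul] using integrable_exp_neg_mul_sq (b := 1 / 2) (by norm_num)

lemma integrable_gaussKernel : Integrable gaussKernel :=
  integrable_exp_neg_sq_div_two.const_mul _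

lemma continuous_gaussKernel : Continuous gaussKernel := by
  unfold gaussKernel; fun_prop

lemma gaussKernel_le_of_mem_Icc {t s : ℝ} (hts : t ≤ s) (hst : s ≤ t + 1) :
    gaussKernel s ≤ exp (1 / 2) * (gaussKernel (t - 1) + gaussKernel (t + 1)) := by
  -- `s² ≥ t² - 2|t|` on the window, and `e^{1/2} e^{-(t ∓ 1)²/2} = e^{-t²/2 ± t}`.
  have key :
      exp (-s ^ 2 / 2) ≤ exp (-(t - 1) ^ 2 / 2 + 1 / 2) + exp (-(t + 1) ^ 2 / 2 + 1 / 2) := by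
    rcases le_total 0 t with ht | ht
    · exact le_add_of_le_of_nonneg (exp_le_exp.2 (by nlinarith)) (exp_pos _).le
    · exact le_add_of_nonneg_of_le (exp_pos _).le (exp_le_exp.2 (by nlinarith))
  unfold gaussKernel
  calc _ ≤ (√(2 * π))⁻¹ *
        (exp (-(t - 1) ^ 2 / 2 + 1 / 2) + exp (-(t + 1) ^ 2 / 2 + 1 / 2)) := by gcongr
    _ = _ := by rw [exp_add, exp_add]; ring

lemma continuous_setIntegral_Ioi {f : ℝ → ℝ} (hf : Integrable f) :
    Continuous fun t ↦ ∫ s in Ioi t, f s := by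
  have h (t : ℝ) : ∫ s in Ioi t, f s = (∫ s in Ioi 0, f s) - ∫ s in 0..t, f s := by
    rw [← intervalIntegral.integral_Ioi_sub_Ioi' hf.integrableOn hf.integrableOn]
    ring
  have hprim := intervalIntegral.continuous_primitive (fun _ _ ↦ hf.intervalIntegrable) 0
  rw [funext h]
  fun_prop

lemma continuous_freeBoundary : Continuous freeBoundary :=
  continuous_const.mul (continuous_setIntegral_Ioi integrable_exp_neg_sq_div_two)

lemma freeBoundary_pos (t : ℝ) : 0 < freeBoundary t := by
  have : NeZero (volume.restrict (Ioi t)) := ⟨by simp⟩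
  exact mul_pos (by positivity) (integral_exp_pos integrable_exp_neg_sq_div_two.integrableOn)

lemma antitone_freeBoundary : Antitone freeBoundary := fun _ _ hab ↦
  mul_le_mul_of_nonneg_left (setIntegral_mono_set integrable_exp_neg_sq_div_two.integrableOn
    (.of_forall fun _ ↦ (exp_pos _).le) (Ioi_subset_Ioi hab).eventuallyLE) (by positivity)

lemma freeBoundary_zero : freeBoundary 0 = 1 / 2 := by
  have hpi : 0 < √(2 * π) := by positivity
  have h (s : ℝ) : exp (-s ^ 2 / 2) = exp (-(1 / 2) * s ^ 2) := by ring_nf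
  simp only [freeBoundary, h, integral_gaussian_Ioi]
  field_simp

lemma half_le_freeBoundary_neg {t : ℝ} (ht : 0 ≤ t) : 1 / 2 ≤ freeBoundary (-t) :=
  freeBoundary_zero ▸ antitone_freeBoundary (neg_nonpos.2 ht)

lemma norm_gaussKernel_div_freeBoundary_le (a : ℝ) {t s : ℝ} (ht : 0 ≤ t) (hts : t ≤ s)
    (hst : s ≤ t + 1) :
    ‖gaussKernel (a + s) / freeBoundary (-s)‖ ≤
      2 * exp (1 / 2) * (gaussKernel (t + (a - 1)) + gaussKernel (t + (a + 1))) := by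
  have hγ : 0 < gaussKernel (a + s) := by unfold gaussKernel; positivity
  have hφ := half_le_freeBoundary_neg (ht.trans hts)
  calc ‖gaussKernel (a + s) / freeBoundary (-s)‖ ≤ 2 * gaussKernel (a + s) := by
        rw [norm_div, Real.norm_of_nonneg hγ.le, Real.norm_of_nonneg (by linarith),
          div_le_iff₀ (by linarith)]
        nlinarith
    _ ≤ 2 * (exp (1 / 2) * (gaussKernel (a + t - 1) + gaussKernel (a + t + 1))) := by
        gcongr
        exact gaussKernel_le_of_mem_Icc (by linarith) (by linarith)
    _ = _ := by ring_nf

lemma plasmaH_eq_integral_Ioi (x : ℝ) :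
    plasmaH x = ∫ t in Ioi 0, gaussKernel (x + t) / freeBoundary (-t) := by
  rw [plasmaH, ← integral_Iic_eq_integral_Iio, ← integral_const_mul, ← neg_zero,
    ← integral_comp_neg_Iic]
  simp only [gaussKernel, neg_zero, neg_neg, ← sub_eq_add_neg, mul_div_assoc]

/-- Riemann sum convergence to the hard edge plasma function:
`(ℓ/√n) Σ_{k=1}^{⌊√n log n⌋} γ(2x + kℓ/√n)/φ(−kℓ/√n) → H(2x)` as `n → ∞`. -/
theorem riemann_sum_to_plasmaH (x ℓ : ℝ) (hℓ : 0 < ℓ) :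
    Tendsto (fun n : ℕ =>
        (ℓ / Real.sqrt n) *
          ∑ k ∈ Finset.Icc 1 ⌊Real.sqrt n * Real.log n⌋₊,
            gaussKernel (2 * x + k * ℓ / Real.sqrt n) /
              freeBoundary (-(k * ℓ) / Real.sqrt n))
      atTop (nhds (plasmaH (2 * x))) := by
  have hsqrt : Tendsto (fun n : ℕ ↦ √n) atTop atTop :=
    tendsto_sqrt_atTop.comp tendsto_natCast_atTop_atTop
  have hδ : Tendsto (fun n : ℕ ↦ ℓ / √n) atTop (𝓝[>] 0) := by
    refine tendsto_nhdsWithin_iff.2 ⟨tendsto_const_nhds.div_atTop hsqrt, ?_⟩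
    filter_upwards [hsqrt.eventually_gt_atTop 0] with n hn using div_pos hℓ hn
  have hM : Tendsto (fun n : ℕ ↦ ⌊√n * log n⌋₊ * (ℓ / √n)) atTop atTop := by
    refine tendsto_natFloor_mul_atTop ?_ hδ
    refine ((tendsto_log_atTop.comp tendsto_natCast_atTop_atTop).const_mul_atTop hℓ).congr' ?_
    filter_upwards [hsqrt.eventually_gt_atTop 0] with n hn
    simp only [Function.comp_apply]
    field_simp
  have hf : Continuous fun t ↦ gaussKernel (2 * x + t) / freeBoundary (-t) :=
    (continuous_gaussKernel.comp (continuous_const_add _)).div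
      (continuous_freeBoundary.comp continuous_neg) fun t ↦ (freeBoundary_pos _).ne'
  have hg := ((integrable_gaussKernel.comp_add_right (2 * x - 1)).add
    (integrable_gaussKernel.comp_add_right (2 * x + 1))).const_mul (2 * exp (1 / 2))
  rw [plasmaH_eq_integral_Ioi]
  simpa only [mul_div_assoc, neg_div] using tendsto_riemannSum_integral_Ioi hf hg.integrableOn
    (fun t s ht ↦ norm_gaussKernel_div_freeBoundary_le (2 * x) ht.le) hδ hM
end

section
/- Integration along the foliation flow (change of variables formula): let a < b be real numbers, let A = {ζ ∈ ℂ : ρ < |ζ| < ρ′} be an annulus with ρ < 1 < ρ′, and for each t ∈ [a,b] let ψ_t : A → ℂ be holomorphic, such that the map (t, ζ) ↦ ψ_t(ζ) is C¹ jointly in (t, ζ). Suppose that the map Ψ : [a,b] × 𝕋 → ℂ, Ψ(t, η) = ψ_t(η), is injective with image D, and that J(t, η) := Re(−conj(η) · ∂_t ψ_t(η) · conj(ψ_t′(η))) > 0 for all (t, η) ∈ [a,b] × 𝕋. Then D is measurable and for every function f : ℂ → ℂ that is absolutely integrable on D with respect to dA, one has ∫_D f dA = 2 ∫_a^b ∫_𝕋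 f(ψ_t(η)) · J(t, η) ds(η) dt. -/
open MeasureTheory Real

/-- The Lebesgue area measure on `ℂ` divided by `π`, so the unit disk has measure 1. -/
noncomputable def dA : Measure ℂ := (ENNReal.ofReal Real.pi)⁻¹ • (volume : Measure ℂ)

/-!
Parametrize `D` injectively by the rectangle `[a, b] × [0, 2π)` through
`t + iθ ↦ ψ_t(e^{iθ})` and apply the change of variables formula. With `η = e^{iθ}`, the real
Jacobian of this map sends `1 ↦ ∂_t ψ_t(η)` and `i ↦ iη ψ_t′(η)`, so its determinant is
`Re(η̄ ∂_t ψ_t(η) conj(ψ_t′(η))) = -J(t, η)`. Fubini over the rectangle then gives the formula,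
the factor `2` being `2π / π`. Only the Jacobian off the null edges `t = a, b` matters, and
there the derivative within `[a, b] × A` is the full derivative of `(t, ζ) ↦ ψ_t(ζ)`.
-/

open Set Metric Complex ComplexConjugate Topology

theorem Complex.bijOn_exp_mul_I_Ico :
    BijOn (fun θ : ℝ => exp (θ * I)) (Ico 0 (2 * π)) (sphere 0 1) := by
  refine ⟨fun θ _ => by simp,
    fun x hx y hy h => Circle.exp_injOn_Ico (by simp) hx hy (Circle.ext h), fun z hz => ?_⟩
  refine ⟨toIcoMod two_pi_pos 0 (arg z), by simpa using toIcoMod_mem_Ico two_pi_pos 0 (arg z), ?_⟩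
  change (Circle.exp (toIcoMod two_pi_pos 0 (arg z)) : ℂ) = z
  rw [toIcoMod, Circle.periodic_exp.sub_zsmul_eq, Circle.coe_exp]
  simpa [mem_sphere_zero_iff_norm.1 hz] using norm_mul_exp_arg_mul_I z

theorem Complex.bijOn_re_prod_exp_im_mul_I (s : Set ℝ) :
    BijOn (fun z : ℂ => (z.re, exp (z.im * I))) (s ×ℂ Ico 0 (2 * π)) (s ×ˢ sphere 0 1) :=
  ((bijOn_id s).prodMap bijOn_exp_mul_I_Ico).comp
    (equivRealProd.bijOn (s := s ×ℂ Ico 0 (2 * π)) fun _ => Iff.rfl)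

theorem Complex.hasFDerivAt_re_prod_exp_im_mul_I (z : ℂ) :
    HasFDerivAt (fun w : ℂ => (w.re, exp (w.im * I)))
      (reCLM.prod (imCLM.smulRight (I * exp (z.im * I)))) z := by
  have hlin : HasFDerivAt (fun w : ℂ => (w.im : ℂ) * I) (imCLM.smulRight I : ℂ →L[ℝ] ℂ) z := by
    convert (imCLM.smulRight I : ℂ →L[ℝ] ℂ).hasFDerivAt using 2 with w
    simp [real_smul]
  refine reCLM.hasFDerivAt.prodMk (hlin.cexp.congr_fderiv ?_)
  ext w
  simp [real_smul]
  ring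

theorem Complex.det_reCLM_smulRight_add_imCLM_smulRight (A B : ℂ) :
    (reCLM.smulRight A + imCLM.smulRight B : ℂ →L[ℝ] ℂ).det = A.re * B.im - A.im * B.re := by
  rw [ContinuousLinearMap.det, ← LinearMap.det_toMatrix basisOneI, Matrix.det_fin_two]
  simp [LinearMap.toMatrix_apply]
  ring

theorem HasFDerivAt.comp_reCLM_prod_imCLM_smulRight {ψ : ℝ → ℂ → ℂ} {L : ℝ × ℂ →L[ℝ] ℂ}
    {t : ℝ} {η : ℂ} (hL : HasFDerivAt (fun p : ℝ × ℂ => ψ p.1 p.2) L (t, η))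
    (hψ : DifferentiableAt ℂ (ψ t) η) (c : ℂ) :
    L.comp (reCLM.prod (imCLM.smulRight c)) =
      reCLM.smulRight (deriv (fun s => ψ s η) t) + imCLM.smulRight (c * deriv (ψ t) η) := by
  have hdt : HasDerivAt (fun s => ψ s η) (L (1, 0)) t :=
    hL.comp_hasDerivAt (f := fun s => (s, η)) t ((hasDerivAt_id t).prodMk (hasDerivAt_const t η))
  have hdζ : L.comp (.inr ℝ ℝ ℂ) =
      ((1 : ℂ →L[ℂ] ℂ).smulRight (deriv (ψ t) η)).restrictScalars ℝ :=
    (hL.comp η (hasFDerivAt_prodMk_right t η)).unique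
      (hψ.hasDerivAt.hasFDerivAt.restrictScalars ℝ)
  ext w
  have hw : ((w.re, w.im • c) : ℝ × ℂ) =
      w.re • (1, 0) + ContinuousLinearMap.inr ℝ ℝ ℂ (w.im • c) := by
    simp
  change L (w.re, w.im • c) = _
  rw [hw, map_add, map_smul, ← ContinuousLinearMap.comp_apply L, hdζ, hdt.deriv]
  simp [real_smul, mul_assoc]

theorem HasFDerivAt.det_comp_reCLM_prod_imCLM_smulRight {ψ : ℝ → ℂ → ℂ}
    {L : ℝ × ℂ →L[ℝ] ℂ} {t : ℝ} {η : ℂ}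
    (hL : HasFDerivAt (fun p : ℝ × ℂ => ψ p.1 p.2) L (t, η))
    (hψ : DifferentiableAt ℂ (ψ t) η) :
    (L.comp (reCLM.prod (imCLM.smulRight (I * η)))).det =
      (conj η * deriv (fun s => ψ s η) t * conj (deriv (ψ t) η)).re := by
  rw [hL.comp_reCLM_prod_imCLM_smulRight hψ, det_reCLM_smulRight_add_imCLM_smulRight]
  simp only [mul_re, mul_im, I_re, I_im, conj_re, conj_im]
  ring

theorem abs_det_fderivWithin_comp_reCLM_prod_imCLM_smulRight {ψ : ℝ → ℂ → ℂ}
    {S : Set (ℝ × ℂ)} {t : ℝ} {η : ℂ} (hS : S ∈ 𝓝 (t, η))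
    (hΦ : DifferentiableOn ℝ (fun p : ℝ × ℂ => ψ p.1 p.2) S) (hψ : DifferentiableAt ℂ (ψ t) η)
    (hpos : 0 < (-conj η * deriv (fun s => ψ s η) t * conj (deriv (ψ t) η)).re) :
    |((fderivWithin ℝ (fun p : ℝ × ℂ => ψ p.1 p.2) S (t, η)).comp
        (reCLM.prod (imCLM.smulRight (I * η)))).det| =
      (-conj η * deriv (fun s => ψ s η) t * conj (deriv (ψ t) η)).re := by
  rw [fderivWithin_of_mem_nhds hS,
    (hΦ.differentiableAt hS).hasFDerivAt.det_comp_reCLM_prod_imCLM_smulRight hψ, ← abs_neg,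
    ← neg_re, ← neg_mul, ← neg_mul, abs_of_pos hpos]

section ChangeOfVariables

variable {E : Type*} [NormedAddCommGroup E]

theorem integrableOn_dA_iff {f : ℂ → E} {s : Set ℂ} :
    IntegrableOn f s dA ↔ IntegrableOn f s := by
  rw [IntegrableOn, dA, Measure.restrict_smul,
    integrable_smul_measure (by simp) (by simp [pi_pos])]
  rfl

variable [NormedSpace ℝ E]

theorem setIntegral_dA (f : ℂ → E) (s : Set ℂ) :
    ∫ z in s, f z ∂dA = π⁻¹ • ∫ z in s, f z := by
  rw [dA, Measure.restrict_smul, integral_smul_measure, ENNReal.toReal_inv,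
    ENNReal.toReal_ofReal pi_pos.le]

theorem Complex.measurableSet_reProdIm {s t : Set ℝ} (hs : MeasurableSet s)
    (ht : MeasurableSet t) : MeasurableSet (s ×ℂ t) :=
  (hs.prod ht).preimage measurableEquivRealProd.measurable

theorem Complex.setIntegral_reProdIm {F : ℂ → E} {s t : Set ℝ}
    (hF : IntegrableOn F (s ×ℂ t)) :
    ∫ z in s ×ℂ t, F z = ∫ x in s, ∫ y in t, F ⟨x, y⟩ := by
  have hpres := volume_preserving_equiv_real_prod.symm
  have hemb := measurableEquivRealProd.symm.measurableEmbedding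
  have hst : measurableEquivRealProd.symm ⁻¹' (s ×ℂ t) = s ×ˢ t := rfl
  rw [← hpres.setIntegral_preimage_emb hemb, hst, Measure.volume_eq_prod, setIntegral_prod]
  · rfl
  · rw [← Measure.volume_eq_prod, ← hst]
    exact (hpres.integrableOn_comp_preimage hemb).2 hF

variable {Φ : ℝ × ℂ → ℂ} {Φ' : ℝ × ℂ → ℝ × ℂ →L[ℝ] ℂ} {s : Set ℝ}

theorem measurableSet_image_prod_sphere (hs : MeasurableSet s)
    (hΦ : ContinuousOn Φ (s ×ˢ sphere 0 1)) (hinj : InjOn Φ (s ×ˢ sphere 0 1)) :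
    MeasurableSet (Φ '' (s ×ˢ sphere 0 1)) :=
  (hs.prod isClosed_sphere.measurableSet).image_of_continuousOn_injOn hΦ hinj

theorem setIntegral_image_prod_sphere (hs : MeasurableSet s)
    (hΦ : ∀ p ∈ s ×ˢ sphere (0 : ℂ) 1, HasFDerivWithinAt Φ (Φ' p) (s ×ˢ sphere 0 1) p)
    (hinj : InjOn Φ (s ×ˢ sphere 0 1)) (f : ℂ → E)
    (hf : IntegrableOn f (Φ '' (s ×ˢ sphere 0 1))) :
    ∫ z in Φ '' (s ×ˢ sphere 0 1), f z =
      ∫ t in s, ∫ θ in (0 : ℝ)..(2 * π),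
        |((Φ' (t, exp (θ * I))).comp (reCLM.prod (imCLM.smulRight (I * exp (θ * I))))).det| •
          f (Φ (t, exp (θ * I))) := by
  have hbij := bijOn_re_prod_exp_im_mul_I s
  have hR : MeasurableSet (s ×ℂ Ico 0 (2 * π)) := measurableSet_reProdIm hs measurableSet_Ico
  have hinj' := hinj.comp hbij.injOn hbij.mapsTo
  have hderiv (z) (hz : z ∈ s ×ℂ Ico 0 (2 * π)) :=
    (hΦ _ (hbij.mapsTo hz)).comp z (hasFDerivAt_re_prod_exp_im_mul_I z).hasFDerivWithinAt
      hbij.mapsTo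
  rw [← hbij.image_eq, ← image_comp] at hf ⊢
  rw [integral_image_eq_integral_abs_det_fderiv_smul volume hR hderiv hinj',
    setIntegral_reProdIm ((integrableOn_image_iff_integrableOn_abs_det_fderiv_smul volume hR
      hderiv hinj' f).1 hf)]
  simp_rw [integral_Ico_eq_integral_Ioo, ← integral_Ioc_eq_integral_Ioo,
    ← intervalIntegral.integral_of_le two_pi_pos.le]
  rfl

end ChangeOfVariables

/-- Integration along the foliation flow (change of variables formula): if
`Ψ(t, η) = ψ_t(η)` is injective on `[a,b] × 𝕋` with image `D` and the Jacobian factor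
`J(t,η) = Re(−η̄ ∂_t ψ_t(η) conj(ψ_t′(η)))` is positive there, then `D` is measurable and
`∫_D f dA = 2 ∫_a^b ∫_𝕋 f(ψ_t(η)) J(t,η) ds(η) dt` for every `f` absolutely
integrable on `D`. Here `∫_𝕋 g ds = (2π)⁻¹ ∫_0^{2π} g(e^{iθ}) dθ`. -/
theorem foliation_flow_change_of_variables
    (a b : ℝ) (hab : a < b) (ρ ρ' : ℝ) (hρ : ρ < 1) (hρ' : 1 < ρ')
    (ψ : ℝ → ℂ → ℂ)
    (hhol : ∀ t ∈ Set.Icc a b, DifferentiableOn ℂ (ψ t) {ζ : ℂ | ρ < ‖ζ‖ ∧ ‖ζ‖ < ρ'})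
    (hC1 : ContDiffOn ℝ 1 (fun p : ℝ × ℂ => ψ p.1 p.2)
      (Set.Icc a b ×ˢ {ζ : ℂ | ρ < ‖ζ‖ ∧ ‖ζ‖ < ρ'}))
    (hinj : Set.InjOn (fun p : ℝ × ℂ => ψ p.1 p.2) (Set.Icc a b ×ˢ Metric.sphere (0 : ℂ) 1))
    (J : ℝ → ℂ → ℝ)
    (hJ : ∀ t η, J t η =
      (-(starRingEnd ℂ) η * deriv (fun s => ψ s η) t * (starRingEnd ℂ) (deriv (ψ t) η)).re)
    (hJpos : ∀ t ∈ Set.Icc a b, ∀ η ∈ Metric.sphere (0 : ℂ) 1, 0 < J t η) :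
    MeasurableSet
      ((fun p : ℝ × ℂ => ψ p.1 p.2) '' (Set.Icc a b ×ˢ Metric.sphere (0 : ℂ) 1)) ∧
    ∀ f : ℂ → ℂ,
      IntegrableOn f
        ((fun p : ℝ × ℂ => ψ p.1 p.2) '' (Set.Icc a b ×ˢ Metric.sphere (0 : ℂ) 1)) dA →
      ∫ z in (fun p : ℝ × ℂ => ψ p.1 p.2) '' (Set.Icc a b ×ˢ Metric.sphere (0 : ℂ) 1),
          f z ∂dA =
        2 * ∫ t in a..b,
          (2 * Real.pi : ℂ)⁻¹ *
            ∫ θ in (0 : ℝ)..(2 * Real.pi),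
              f (ψ t (Complex.exp (θ * Complex.I))) *
                ((J t (Complex.exp (θ * Complex.I)) : ℝ) : ℂ) := by
  set A := {ζ : ℂ | ρ < ‖ζ‖ ∧ ‖ζ‖ < ρ'}
  have hA : IsOpen A := (isOpen_lt continuous_const continuous_norm).inter
    (isOpen_lt continuous_norm continuous_const)
  have hsphere : sphere (0 : ℂ) 1 ⊆ A := fun η hη => by
    rw [mem_sphere_zero_iff_norm] at hη
    exact ⟨hη ▸ hρ, hη ▸ hρ'⟩
  have hderiv (p) (hp : p ∈ Icc a b ×ˢ sphere (0 : ℂ) 1) :=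
    (hC1.differentiableOn one_ne_zero p (prod_mono le_rfl hsphere hp)).hasFDerivWithinAt.mono
      (prod_mono le_rfl hsphere)
  refine ⟨measurableSet_image_prod_sphere measurableSet_Icc
    (fun p hp => (hderiv p hp).continuousWithinAt) hinj, fun f hf => ?_⟩
  have hinner : ∀ t ∈ Ioo a b, ∀ θ : ℝ,
      |((fderivWithin ℝ (fun p : ℝ × ℂ => ψ p.1 p.2) (Icc a b ×ˢ A) (t, exp (θ * I))).comp
          (reCLM.prod (imCLM.smulRight (I * exp (θ * I))))).det| • f (ψ t (exp (θ * I))) =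
        f (ψ t (exp (θ * I))) * (J t (exp (θ * I)) : ℂ) := by
    intro t ht θ
    have hη : exp (θ * I) ∈ sphere 0 1 := by simp
    have ht' := Ioo_subset_Icc_self ht
    rw [abs_det_fderivWithin_comp_reCLM_prod_imCLM_smulRight
      (prod_mem_nhds (Icc_mem_nhds ht.1 ht.2) (hA.mem_nhds (hsphere hη)))
      (hC1.differentiableOn one_ne_zero) ((hhol t ht').differentiableAt
      (hA.mem_nhds (hsphere hη))) (hJ t _ ▸ hJpos t ht' _ hη), ← hJ, real_smul, mul_comm]
  rw [setIntegral_dA, setIntegral_image_prod_sphere measurableSet_Icc hderiv hinj f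
      (integrableOn_dA_iff.1 hf), integral_Icc_eq_integral_Ioo,
    setIntegral_congr_fun measurableSet_Ioo fun t ht =>
      intervalIntegral.integral_congr fun θ _ => hinner t ht θ,
    ← integral_Ioc_eq_integral_Ioo, ← intervalIntegral.integral_of_le hab.le,
    intervalIntegral.integral_const_mul, real_smul, ← mul_assoc]
  congr 1
  push_cast
  field_simp
end

section
/- Discarding lower order terms near the hard edge (instance of the reduction of Section 2.4 for the Ginibre potential): for every constant A > 0, sup over all ζ ∈ ℂ with 1 − A/√n ≤ |ζ| ≤ 1 of the sum Σ_{j} |ζ|^{2j} e^{−n|ζ|²} / c_{j,n}, taken over all integers j with 0 ≤ j ≤ n − √n · log n, tends to 0 as n → ∞. -/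
/-!
Integrating over the annulus `j/n < |w|² ≤ (j+1)/n`, which has `dA`-measure `1/n`, gives
`c_{j,n} ≥ (j/n)^j e^{-(j+1)} / n`. With `t = n|ζ|²` the `j`-th term is therefore at most
`n e (t/j)^j e^{j-t} ≤ n e exp(-(t-j)²/(2t))`, the last step being `log x ≤ sinh (log x)` at
`x = t/j`. On the annulus `t ≥ n - 2A√n`, so `t - j ≥ √n log n / 2` once `log n ≥ 4A`, and each
of the at most `n + 1` terms is at most `n e exp(-(log n)²/8) ≤ e/n²` once `log n ≥ 24`.
-/

open MeasureTheory Real Filter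

/-- `c_{j,n} = ∫_{|w| ≤ 1} |w|^{2j} e^{-n|w|²} dA(w)`. -/
noncomputable def cJN (j n : ℕ) : ℝ :=
  ∫ w in {w : ℂ | ‖w‖ ≤ 1}, ‖w‖ ^ (2 * j) * Real.exp (-(n : ℝ) * ‖w‖ ^ 2) ∂dA

theorem div_pow_mul_exp_sub_le_exp {j : ℕ} {t : ℝ} (hjt : (j : ℝ) ≤ t) :
    (t / j) ^ j * exp (j - t) ≤ exp (-(t - j) ^ 2 / (2 * t)) := by
  rcases Nat.eq_zero_or_pos j with rfl | hj
  · simp only [Nat.cast_zero, pow_zero, one_mul, zero_sub, sub_zero, exp_le_exp, neg_div,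
      neg_le_neg_iff] at hjt ⊢
    exact div_le_of_le_mul₀ (by positivity) hjt (by nlinarith)
  have hj0 : (0 : ℝ) < j := Nat.cast_pos.2 hj
  have ht : 0 < t := hj0.trans_le hjt
  have hlog : log (t / j) ≤ (t / j - j / t) / 2 :=
    calc log (t / j) ≤ sinh (log (t / j)) :=
          self_le_sinh_iff.2 (log_nonneg ((one_le_div hj0).2 hjt))
      _ = (t / j - j / t) / 2 := by rw [sinh_log (by positivity), inv_div]
  calc (t / j) ^ j * exp (j - t) = exp (j * log (t / j) + (j - t)) := by
        rw [← rpow_natCast, rpow_def_of_pos (by positivity), exp_add, mul_comm (log _)]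
    _ ≤ exp (j * ((t / j - j / t) / 2) + (j - t)) := by gcongr
    _ = exp (-(t - j) ^ 2 / (2 * t)) := by
        congr 1; field_simp; ring

theorem dA_closedBall {r : ℝ} (hr : 0 ≤ r) :
    dA (Metric.closedBall (0 : ℂ) r) = ENNReal.ofReal (r ^ 2) := by
  have hπ : ENNReal.ofReal π ≠ 0 := ENNReal.ofReal_ne_zero_iff.2 pi_pos
  rw [dA, Measure.smul_apply, smul_eq_mul, Complex.volume_closedBall, ← ENNReal.ofReal_coe_nnreal,
    NNReal.coe_real_pi, ← ENNReal.ofReal_pow hr, mul_comm, mul_assoc,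
    ENNReal.mul_inv_cancel hπ ENNReal.ofReal_ne_top, mul_one]

theorem dA_closedBall_sqrt_diff {a b : ℝ} (ha : 0 ≤ a) (hab : a ≤ b) :
    dA (Metric.closedBall 0 √b \ Metric.closedBall 0 √a) = ENNReal.ofReal (b - a) := by
  rw [measure_sdiff (Metric.closedBall_subset_closedBall (sqrt_le_sqrt hab))
      measurableSet_closedBall.nullMeasurableSet
      (by simp [dA_closedBall (sqrt_nonneg a)]),
    dA_closedBall (sqrt_nonneg _), dA_closedBall (sqrt_nonneg _), sq_sqrt ha,
    sq_sqrt (ha.trans hab), ← ENNReal.ofReal_sub _ ha]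

theorem integrableOn_closedBall_dA {f : ℂ → ℝ} (hf : Continuous f) (r : ℝ) :
    IntegrableOn f (Metric.closedBall 0 r) dA := by
  rw [IntegrableOn, dA, Measure.restrict_smul]
  exact (hf.continuousOn.integrableOn_compact (isCompact_closedBall _ _)).smul_measure
    (ENNReal.inv_ne_top.2 (ENNReal.ofReal_ne_zero_iff.2 pi_pos))

theorem cJN_ge {j n : ℕ} (hjn : j + 1 ≤ n) :
    (j / n : ℝ) ^ j * exp (-(j + 1)) / n ≤ cJN j n := by
  have hn : (0 : ℝ) < n := by exact_mod_cast (by omega : 0 < n)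
  set f : ℂ → ℝ := fun w => ‖w‖ ^ (2 * j) * exp (-(n : ℝ) * ‖w‖ ^ 2)
  set S := Metric.closedBall (0 : ℂ) √((j + 1) / n) \ Metric.closedBall 0 √(j / n)
  have hS : dA S = ENNReal.ofReal (1 / n) := by
    rw [dA_closedBall_sqrt_diff (by positivity) (by gcongr; linarith)]
    congr 1; field_simp; ring
  have hS1 : S ⊆ Metric.closedBall 0 1 :=
    Set.sdiff_subset.trans (Metric.closedBall_subset_closedBall
      (sqrt_le_one.2 ((div_le_one hn).2 (by exact_mod_cast hjn))))
  have hf_ge : ∀ w ∈ S, (j / n : ℝ) ^ j * exp (-(j + 1)) ≤ f w := by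
    rintro w ⟨hw_out, hw_in⟩
    rw [mem_closedBall_zero_iff, ← sq_le_sq₀ (norm_nonneg _) (sqrt_nonneg _),
      sq_sqrt (by positivity), le_div_iff₀ hn] at hw_out
    rw [mem_closedBall_zero_iff, not_le, ← sq_lt_sq₀ (sqrt_nonneg _) (norm_nonneg _),
      sq_sqrt (by positivity)] at hw_in
    rw [show f w = (‖w‖ ^ 2) ^ j * exp (-(n : ℝ) * ‖w‖ ^ 2) by simp only [f, pow_mul]]
    gcongr
    linarith
  have hf_int := integrableOn_closedBall_dA (f := f) (by fun_prop) 1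
  calc (j / n : ℝ) ^ j * exp (-(j + 1)) / n
        = (j / n : ℝ) ^ j * exp (-(j + 1)) * (dA S).toReal := by
        rw [hS, ENNReal.toReal_ofReal (by positivity)]; ring
    _ ≤ ∫ w in S, f w ∂dA :=
        setIntegral_ge_of_const_le_real
          (measurableSet_closedBall.diff measurableSet_closedBall)
          (by simp [hS]) hf_ge (hf_int.mono_set hS1)
    _ ≤ ∫ w in Metric.closedBall 0 1, f w ∂dA :=
        setIntegral_mono_set hf_int (.of_forall fun w => by positivity) hS1.eventuallyLE
    _ = cJN j n := by simp only [cJN, f, Metric.closedBall, dist_zero_right]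

theorem div_pow_mul_exp_neg_div_cJN_le {j n : ℕ} {t : ℝ} (hjn : j + 1 ≤ n) (hjt : (j : ℝ) ≤ t) :
    (t / n) ^ j * exp (-t) / cJN j n ≤ n * exp 1 * exp (-(t - j) ^ 2 / (2 * t)) := by
  have hn : (0 : ℝ) < n := by exact_mod_cast (by omega : 0 < n)
  have hsplit : (t / n) ^ j = (j / n : ℝ) ^ j * (t / j) ^ j ∧ 0 < (j / n : ℝ) ^ j := by
    rcases j.eq_zero_or_pos with rfl | hj
    · simp
    · have : (j : ℝ) ≠ 0 := by positivity
      exact ⟨by rw [← mul_pow]; field_simp, by positivity⟩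
  have hexp : exp (-t) = exp (-(j + 1)) * exp 1 * exp (j - t) := by
    rw [← exp_add, ← exp_add]; ring_nf
  have ht : 0 ≤ t := j.cast_nonneg.trans hjt
  calc (t / n) ^ j * exp (-t) / cJN j n
      ≤ (t / n) ^ j * exp (-t) / ((j / n : ℝ) ^ j * exp (-(j + 1)) / n) :=
        div_le_div_of_nonneg_left (by positivity) (div_pos (mul_pos hsplit.2 (exp_pos _)) hn)
          (cJN_ge hjn)
    _ = n * exp 1 * ((t / j) ^ j * exp (j - t)) := by
        rw [hsplit.1, hexp]; field_simp [hsplit.2.ne', hn.ne']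
    _ ≤ n * exp 1 * exp (-(t - j) ^ 2 / (2 * t)) := by
        gcongr; exact div_pow_mul_exp_sub_le_exp hjt

theorem sub_two_mul_sqrt_le_mul_sq {x A r : ℝ} (hx : 0 ≤ x) (h : 1 - A / √x ≤ r) :
    x - 2 * A * √x ≤ x * r ^ 2 := by
  rcases hx.eq_or_lt with rfl | hx
  · simp
  have hs : 0 < √x := sqrt_pos.2 hx
  have hsr : √x - A ≤ √x * r := by
    have := (le_div_iff₀ hs).1 (by linarith : 1 - r ≤ A / √x)
    linarith
  have hxr : x * r ^ 2 = (√x * r) ^ 2 := by rw [mul_pow, sq_sqrt hx.le]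
  have hx' : x = √x ^ 2 := (sq_sqrt hx.le).symm
  rcases le_or_gt A √x with hA | hA
  · calc x - 2 * A * √x ≤ (√x - A) ^ 2 := by nlinarith [sq_nonneg A]
      _ ≤ x * r ^ 2 := hxr ▸ pow_le_pow_left₀ (sub_nonneg.2 hA) hsr 2
  · nlinarith

theorem exp_neg_log_sq_div_eight_le {x : ℝ} (hx : 0 < x) (h : 24 ≤ log x) :
    exp (-log x ^ 2 / 8) ≤ (x ^ 3)⁻¹ :=
  calc exp (-log x ^ 2 / 8) ≤ exp (-log (x ^ 3)) := by
        rw [exp_le_exp, log_pow]; push_cast; nlinarith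
    _ = (x ^ 3)⁻¹ := by rw [exp_neg, exp_log (by positivity)]

theorem pow_mul_exp_div_cJN_le {A r : ℝ} {j n : ℕ} (h24 : 24 ≤ log n) (hA : 4 * A ≤ log n)
    (hr : 1 - A / √n ≤ r) (hr0 : 0 ≤ r) (hr1 : r ≤ 1) (hj : (j : ℝ) ≤ n - √n * log n) :
    r ^ (2 * j) * exp (-(n : ℝ) * r ^ 2) / cJN j n ≤ exp 1 / n ^ 2 := by
  have hn : 1 < (n : ℝ) := (log_pos_iff n.cast_nonneg).1 (by linarith)
  have hs : 1 < √n := by rwa [lt_sqrt zero_le_one, one_pow]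
  set t := (n : ℝ) * r ^ 2
  have ht_lo : n - 2 * A * √n ≤ t := sub_two_mul_sqrt_le_mul_sq n.cast_nonneg hr
  have ht_hi : t ≤ n := mul_le_of_le_one_right n.cast_nonneg (pow_le_one₀ hr0 hr1)
  have hgap : √n * log n / 2 ≤ t - j := by
    nlinarith [mul_nonneg (sqrt_nonneg n) (by linarith : 0 ≤ log n - 4 * A)]
  have hslog : 1 ≤ √n * log n := by nlinarith
  have hjn : j + 1 ≤ n := by exact_mod_cast (by linarith : (j : ℝ) + 1 ≤ n)
  have hdecay : log n ^ 2 / 8 ≤ (t - j) ^ 2 / (2 * t) := by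
    have hsq : n * log n ^ 2 / 4 ≤ (t - j) ^ 2 := by
      nlinarith [pow_le_pow_left₀ (by positivity) hgap 2, sq_sqrt n.cast_nonneg]
    rw [le_div_iff₀ (by nlinarith)]
    nlinarith [sq_nonneg (log n)]
  calc r ^ (2 * j) * exp (-(n : ℝ) * r ^ 2) / cJN j n = (t / n) ^ j * exp (-t) / cJN j n := by
        rw [mul_div_cancel_left₀ _ (by positivity), pow_mul, neg_mul]
    _ ≤ n * exp 1 * exp (-(t - j) ^ 2 / (2 * t)) :=
        div_pow_mul_exp_neg_div_cJN_le hjn (by linarith)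
    _ ≤ n * exp 1 * exp (-log n ^ 2 / 8) := by
        gcongr ?_ * exp ?_; rwa [neg_div, neg_div, neg_le_neg_iff]
    _ ≤ n * exp 1 * ((n : ℝ) ^ 3)⁻¹ := by
        gcongr; exact exp_neg_log_sq_div_eight_le (by linarith) h24
    _ = exp 1 / n ^ 2 := by field_simp

theorem discard_lower_order_terms_general (A : ℝ) :
    Tendsto (fun n : ℕ =>
        ⨆ ζ ∈ {ζ : ℂ | 1 - A / Real.sqrt n ≤ ‖ζ‖ ∧ ‖ζ‖ ≤ 1},
          ∑ j ∈ (Finset.range (n + 1)).filter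
              (fun j : ℕ => (j : ℝ) ≤ (n : ℝ) - Real.sqrt n * Real.log n),
            ‖ζ‖ ^ (2 * j) * Real.exp (-(n : ℝ) * ‖ζ‖ ^ 2) / cJN j n)
      atTop (nhds 0) := by
  have hlog : Tendsto (fun n : ℕ => log n) atTop atTop :=
    tendsto_log_atTop.comp tendsto_natCast_atTop_atTop
  refine squeeze_zero' (.of_forall fun n => ?_) ?_
    (tendsto_const_div_atTop_nhds_zero_nat (2 * exp 1))
  · exact Real.iSup_nonneg fun ζ => Real.iSup_nonneg fun _ => Finset.sum_nonneg fun j _ =>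
      div_nonneg (by positivity) (integral_nonneg fun w => by positivity)
  filter_upwards [hlog.eventually_ge_atTop 24, hlog.eventually_ge_atTop (4 * A)] with n h24 hA
  have hn : 1 ≤ (n : ℝ) := ((log_pos_iff n.cast_nonneg).1 (by linarith)).le
  refine Real.iSup_le (fun ζ => Real.iSup_le (fun ⟨hζ, hζ1⟩ => ?_) (by positivity)) (by positivity)
  refine (Finset.sum_le_card_nsmul _ _ _ fun j hj =>
    pow_mul_exp_div_cJN_le h24 hA hζ (norm_nonneg ζ) hζ1 (Finset.mem_filter.1 hj).2).trans ?_
  calc _ ≤ ((n : ℝ) + 1) * (exp 1 / n ^ 2) := by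
        rw [nsmul_eq_mul]
        gcongr
        exact_mod_cast (Finset.card_filter_le _ _).trans (Finset.card_range (n + 1)).le
    _ = (1 + 1 / n) * exp 1 / n := by field_simp
    _ ≤ 2 * exp 1 / n := by
        gcongr
        linarith [(div_le_one (by positivity)).2 hn]

/-- Discarding lower order terms near the hard edge: for every `A > 0`, the supremum over
`1 − A/√n ≤ |ζ| ≤ 1` of `Σ_{0 ≤ j ≤ n − √n log n} |ζ|^{2j} e^{−n|ζ|²}/c_{j,n}`
tends to `0` as `n → ∞`. -/
theorem discard_lower_order_terms (A : ℝ) (hA : 0 < A) :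
    Tendsto (fun n : ℕ =>
        ⨆ ζ ∈ {ζ : ℂ | 1 - A / Real.sqrt n ≤ ‖ζ‖ ∧ ‖ζ‖ ≤ 1},
          ∑ j ∈ (Finset.range (n + 1)).filter
              (fun j : ℕ => (j : ℝ) ≤ (n : ℝ) - Real.sqrt n * Real.log n),
            ‖ζ‖ ^ (2 * j) * Real.exp (-(n : ℝ) * ‖ζ‖ ^ 2) / cJN j n)
      atTop (nhds 0) :=
  discard_lower_order_terms_general A
end

section
/- Uniform bound on the hard-edge Ginibre one-point function (instance of Corollary 2.5): there exists a constant C > 0 such that for all integers n ≥ 1 and all ζ ∈ ℂ with |ζ| ≤ 1, Σ_{j=0}^{n−1} |ζ|^{2j} e^{−n|ζ|²} / c_{j,n} ≤ C n. -/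
open MeasureTheory Real

/-! In polar coordinates `c_{j,n} = ∫₀¹ t^j e^{-nt} dt = n^{-(j+1)} ∫₀ⁿ s^j e^{-s} ds`, and the
incomplete Gamma integral equals `j! · P(Poisson(n) > j)`. For `j < n` this probability is at least
`1/2`: reflecting the Poisson weights `n^i/i!` about `n - 1/2` shows that the mass below `n` is at
most the mass in `[n, 2n)`. So `c_{j,n} ≥ j!/(2 n^{j+1})`, each summand is at most
`2n e^{-x} x^j/j!` with `x = n|ζ|²`, and the exponential series bounds the sum by `2n`. -/

open Finset Nat

theorem setIntegral_norm_le_one_dA (f : ℝ → ℝ) (hf : Continuous f) :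
    ∫ w in {w : ℂ | ‖w‖ ≤ 1}, f (‖w‖ ^ 2) ∂dA = ∫ t in (0 : ℝ)..1, f t := by
  have hdisk : ∫ w in {w : ℂ | ‖w‖ ≤ 1}, f (‖w‖ ^ 2) ∂dA
      = π⁻¹ * ∫ w : ℂ, (Set.Iic 1).indicator (fun r => f (r ^ 2)) ‖w‖ := by
    rw [dA, Measure.restrict_smul, integral_smul_measure, ← integral_indicator
      (measurableSet_le continuous_norm.measurable measurable_const)]
    simp [ENNReal.toReal_inv, pi_pos.le, Set.indicator, smul_eq_mul]
  have hpolar : ∫ w : ℂ, (Set.Iic 1).indicator (fun r => f (r ^ 2)) ‖w‖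
      = 2 * π * ∫ r in (0 : ℝ)..1, r * f (r ^ 2) := by
    rw [integral_fun_norm_addHaar, Complex.finrank_real_complex, measureReal_def,
      Complex.volume_ball, intervalIntegral.integral_of_le zero_le_one, ← Set.Ioi_inter_Iic,
      ← setIntegral_indicator measurableSet_Iic]
    simp [Set.indicator, NNReal.coe_real_pi, mul_assoc]
  have hsubst : ∫ r in (0 : ℝ)..1, r * f (r ^ 2) = 2⁻¹ * ∫ t in (0 : ℝ)..1, f t := by
    have h := intervalIntegral.integral_comp_mul_deriv (a := 0) (b := 1) (f := fun r => r ^ 2)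
      (f' := fun r => 2 * r) (g := f) (fun x _ => by simpa using hasDerivAt_pow 2 x)
      (by fun_prop) hf
    rw [zero_pow two_ne_zero, one_pow] at h
    rw [← h, ← intervalIntegral.integral_const_mul]
    congr 1; ext r; rw [Function.comp_apply]; ring
  rw [hdisk, hpolar, hsubst]
  field_simp

theorem cJN_eq_intervalIntegral (j n : ℕ) :
    cJN j n = ∫ t in (0 : ℝ)..1, t ^ j * exp (-(n * t)) := by
  rw [← setIntegral_norm_le_one_dA _ (by fun_prop), cJN]
  simp_rw [pow_mul, neg_mul]

theorem intervalIntegral_pow_mul_exp_neg_mul (j : ℕ) {c : ℝ} (hc : c ≠ 0) (x : ℝ) :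
    ∫ t in (0 : ℝ)..x, t ^ j * exp (-(c * t))
      = (c ^ (j + 1))⁻¹ * ∫ s in (0 : ℝ)..c * x, s ^ j * exp (-s) := by
  have hscale : ∀ t, t ^ j * exp (-(c * t)) = (c ^ j)⁻¹ * ((c * t) ^ j * exp (-(c * t))) := by
    intro t; rw [mul_pow]; field_simp
  simp_rw [hscale, intervalIntegral.integral_const_mul,
    intervalIntegral.integral_comp_mul_left (fun s => s ^ j * exp (-s)) hc, mul_zero, smul_eq_mul,
    pow_succ, mul_inv, mul_assoc]

noncomputable def expPartialSum (j : ℕ) (x : ℝ) : ℝ := ∑ i ∈ range j, x ^ i / i !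

theorem hasDerivAt_expPartialSum_succ (j : ℕ) (x : ℝ) :
    HasDerivAt (expPartialSum (j + 1)) (expPartialSum j x) x := by
  have h : HasDerivAt (expPartialSum (j + 1))
      (∑ i ∈ range (j + 1), (i : ℝ) * x ^ (i - 1) / i !) x :=
    HasDerivAt.fun_sum fun i _ => (hasDerivAt_pow i x).div_const _
  refine h.congr_deriv ?_
  rw [sum_range_succ', expPartialSum]
  simp only [CharP.cast_eq_zero, zero_mul, zero_div, add_zero]
  refine sum_congr rfl fun i _ => ?_
  rw [factorial_succ, add_tsub_cancel_right]
  push_cast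
  field_simp

theorem expPartialSum_succ_zero (j : ℕ) : expPartialSum (j + 1) 0 = 1 := by
  simp [expPartialSum, sum_range_succ']

theorem intervalIntegral_pow_mul_exp_neg (j : ℕ) (x : ℝ) :
    ∫ s in (0 : ℝ)..x, s ^ j * exp (-s) = j ! * (1 - exp (-x) * expPartialSum (j + 1) x) := by
  have hderiv : ∀ s ∈ Set.uIcc (0 : ℝ) x,
      HasDerivAt (fun y => -(j ! * (exp (-y) * expPartialSum (j + 1) y))) (s ^ j * exp (-s)) s := by
    intro s _
    refine ((((hasDerivAt_neg s).exp).mul (hasDerivAt_expPartialSum_succ j s)).const_mul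
      (j ! : ℝ)).neg.congr_deriv ?_
    rw [expPartialSum, expPartialSum, sum_range_succ]
    field_simp
    ring
  have hint : IntervalIntegrable (fun s => s ^ j * exp (-s)) volume 0 x :=
    (by fun_prop : Continuous fun s : ℝ => s ^ j * exp (-s)).intervalIntegrable _ _
  rw [intervalIntegral.integral_eq_sub_of_hasDerivAt hderiv hint, expPartialSum_succ_zero, neg_zero,
    exp_zero]
  ring

-- `(a + 2m + 1)! / a!` is a product of `2m + 1` factors placed symmetrically about `a + m + 1`.
theorem factorial_add_two_mul_add_one_le (a m : ℕ) :
    (a + 2 * m + 1)! ≤ (a + m + 1) ^ (2 * m + 1) * a ! := by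
  induction m generalizing a with
  | zero => simp [factorial_succ]
  | succ m ih =>
    have hpair : (a + 2 * m + 3) * (a + 1) ≤ (a + m + 2) ^ 2 := by nlinarith
    calc (a + 2 * (m + 1) + 1)! = (a + 2 * m + 3) * (a + 1 + 2 * m + 1)! := by
          rw [show a + 2 * (m + 1) + 1 = (a + 1 + 2 * m + 1) + 1 by ring, factorial_succ]; ring_nf
      _ ≤ (a + 2 * m + 3) * ((a + 1 + m + 1) ^ (2 * m + 1) * (a + 1)!) :=
          Nat.mul_le_mul_left _ (ih (a + 1))
      _ = (a + 2 * m + 3) * (a + 1) * ((a + m + 2) ^ (2 * m + 1) * a !) := by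
          rw [factorial_succ]; ring_nf
      _ ≤ (a + m + 2) ^ 2 * ((a + m + 2) ^ (2 * m + 1) * a !) := Nat.mul_le_mul_right _ hpair
      _ = (a + (m + 1) + 1) ^ (2 * (m + 1) + 1) * a ! := by ring

-- With `n = a + m + 1`, this compares the Poisson weights at `n - 1 - m` and `n + m`.
theorem pow_div_factorial_le_reflect (a m : ℕ) :
    ((a + m + 1 : ℕ) : ℝ) ^ a / a ! ≤
      ((a + m + 1 : ℕ) : ℝ) ^ (a + 2 * m + 1) / (a + 2 * m + 1)! := by
  have h := factorial_add_two_mul_add_one_le a m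
  rw [add_assoc a (2 * m)] at h ⊢
  rw [div_le_div_iff₀ (by positivity) (by positivity), pow_add, mul_assoc]
  gcongr
  exact_mod_cast h

theorem expPartialSum_self_le (n : ℕ) : expPartialSum n n ≤ exp n / 2 := by
  have hreflect : expPartialSum n n ≤ ∑ i ∈ Ico n (2 * n), (n : ℝ) ^ i / i ! := by
    rw [expPartialSum, ← sum_range_reflect, sum_Ico_eq_sum_range, two_mul, add_tsub_cancel_right]
    refine sum_le_sum fun m hm => ?_
    obtain ⟨a, rfl⟩ : ∃ a, n = a + m + 1 := ⟨n - m - 1, by grind⟩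
    rw [show a + m + 1 - 1 - m = a by omega, show a + m + 1 + m = a + 2 * m + 1 by ring]
    exact pow_div_factorial_le_reflect a m
  have htotal : expPartialSum n n + ∑ i ∈ Ico n (2 * n), (n : ℝ) ^ i / i ! ≤ exp n := by
    rw [expPartialSum, sum_range_add_sum_Ico _ (by omega)]
    exact sum_le_exp_of_nonneg n.cast_nonneg _
  linarith

theorem factorial_div_le_cJN {j n : ℕ} (hj : j < n) :
    j ! / (2 * (n : ℝ) ^ (j + 1)) ≤ cJN j n := by
  have hn : (n : ℝ) ≠ 0 := Nat.cast_ne_zero.2 (by omega)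
  have htail : exp (-n) * expPartialSum (j + 1) n ≤ 1 / 2 := by
    have hmono : expPartialSum (j + 1) n ≤ expPartialSum n n :=
      sum_le_sum_of_subset_of_nonneg (range_subset_range.2 hj) fun i _ _ => by positivity
    calc exp (-n) * expPartialSum (j + 1) n ≤ exp (-n) * (exp n / 2) := by
          gcongr; exact hmono.trans (expPartialSum_self_le n)
      _ = 1 / 2 := by rw [exp_neg]; field_simp
  rw [cJN_eq_intervalIntegral, intervalIntegral_pow_mul_exp_neg_mul j hn, mul_one,
    intervalIntegral_pow_mul_exp_neg, div_eq_inv_mul, mul_inv, mul_comm (2 : ℝ)⁻¹, mul_assoc,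
    mul_comm (2 : ℝ)⁻¹ (j ! : ℝ)]
  gcongr
  linarith

theorem pow_mul_exp_div_cJN_le_s11 {j n : ℕ} (hj : j < n) {t : ℝ} (ht : 0 ≤ t) :
    t ^ j * exp (-(n * t)) / cJN j n ≤ 2 * n * exp (-(n * t)) * ((n * t) ^ j / j !) := by
  have hc : 0 < (j ! : ℝ) / (2 * (n : ℝ) ^ (j + 1)) := by
    have : 0 < n := by omega
    positivity
  calc t ^ j * exp (-(n * t)) / cJN j n
      ≤ t ^ j * exp (-(n * t)) / (j ! / (2 * (n : ℝ) ^ (j + 1))) :=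
        div_le_div_of_nonneg_left (by positivity) hc (factorial_div_le_cJN hj)
    _ = 2 * n * exp (-(n * t)) * ((n * t) ^ j / j !) := by
        field_simp
        ring

/-- Uniform bound on the hard-edge Ginibre one-point function: there is `C > 0` with
`Σ_{j=0}^{n−1} |ζ|^{2j} e^{−n|ζ|²}/c_{j,n} ≤ C n` for all `n ≥ 1` and `|ζ| ≤ 1`. -/
theorem hard_edge_one_point_bound :
    ∃ C > (0 : ℝ), ∀ n : ℕ, 1 ≤ n → ∀ ζ : ℂ, ‖ζ‖ ≤ 1 →
      ∑ j ∈ Finset.range n, ‖ζ‖ ^ (2 * j) * Real.exp (-(n : ℝ) * ‖ζ‖ ^ 2) / cJN j n ≤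
        C * n := by
  refine ⟨2, two_pos, fun n _ ζ _ => ?_⟩
  set x := (n : ℝ) * ‖ζ‖ ^ 2
  calc ∑ j ∈ range n, ‖ζ‖ ^ (2 * j) * exp (-(n : ℝ) * ‖ζ‖ ^ 2) / cJN j n
      ≤ ∑ j ∈ range n, 2 * n * exp (-x) * (x ^ j / j !) := sum_le_sum fun j hj => by
        rw [pow_mul, neg_mul]
        exact pow_mul_exp_div_cJN_le_s11 (mem_range.1 hj) (by positivity)
    _ = 2 * n * exp (-x) * expPartialSum n x := by rw [expPartialSum, mul_sum]
    _ ≤ 2 * n * exp (-x) * exp x := by gcongr; exact sum_le_exp_of_nonneg (by positivity) n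
    _ = 2 * n := by rw [exp_neg]; field_simp
end
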